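/- Let V be a finite-dimensional real vector space with the natural pairing on W = V ⊕ V*. If φ is a generalized almost complex structure on W (orthogonal with φ² = −1), then its +i eigenspace L ⊂ W ⊗ ℂ is a maximal isotropic subspace satisfying L ∩ L̄ = 0, where the pairing is extended complex-bilinearly. -/

import Mathlib

/-!
Every element of `W ⊗ ℂ` is uniquely `a + i b` with `a, b ∈ W`, and `L` consists exactly of the
vectors `a - i φ a`. Orthogonality together with `φ² = -1` makes `φ` skew for the pairing, which
gives isotropy. Pairing `a + i b` with `m - i φ m` has imaginary part `⟨φ a + b, m⟩`, so if
`a + i b` is orthogonal to `L`, nondegeneracy forces `b = -φ a`: this is maximality. The map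
`a ↦ a - i φ a` is a real isomorphism `W ≅ L`, so `2 dim_ℂ L = dim_ℝ W = 2 dim_ℝ V`. Finally
`a - i φ a = conj (c - i φ c)` forces `φ a = 0`, hence `a = 0`.
-/

open Module
open scoped TensorProduct

noncomputable section

def naturalPairing (V : Type*) [AddCommGroup V] [Module ℝ V] :
    LinearMap.BilinForm ℝ (V × Module.Dual ℝ V) :=
  LinearMap.mk₂ ℝ (fun v w => (v.2 w.1 + w.2 v.1) / 2)
    (by intro m₁ m₂ n; simp [map_add]; ring)
    (by intro c m n; simp; ring)
    (by intro m n₁ n₂; simp [map_add]; ring)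
    (by intro c m n; simp; ring)

/-- The complexification `(V ⊕ V*) ⊗ ℂ`. -/
def WC (V : Type*) [AddCommGroup V] [Module ℝ V] : Type _ :=
  ℂ ⊗[ℝ] (V × Module.Dual ℝ V)

instance (V : Type*) [AddCommGroup V] [Module ℝ V] : AddCommGroup (WC V) :=
  TensorProduct.addCommGroup

instance (V : Type*) [AddCommGroup V] [Module ℝ V] : Module ℂ (WC V) :=
  TensorProduct.leftModule

instance (V : Type*) [AddCommGroup V] [Module ℝ V] : Module ℝ (WC V) := by
  unfold WC; infer_instance

/-- The complex-bilinear extension of the natural pairing to `(V ⊕ V*) ⊗ ℂ`. -/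
def naturalPairingC (V : Type*) [AddCommGroup V] [Module ℝ V] :
    LinearMap.BilinForm ℂ (WC V) :=
  (naturalPairing V).baseChange ℂ

/-- The complexification of a real endomorphism of `V ⊕ V*`. -/
def cplx {V : Type*} [AddCommGroup V] [Module ℝ V]
    (φ : (V × Module.Dual ℝ V) →ₗ[ℝ] (V × Module.Dual ℝ V)) : WC V →ₗ[ℂ] WC V :=
  LinearMap.baseChange ℂ φ

/-- Complex conjugation on `(V ⊕ V*) ⊗ ℂ` (an ℝ-linear involution). -/
def conjW (V : Type*) [AddCommGroup V] [Module ℝ V] : WC V →ₗ[ℝ] WC V :=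
  LinearMap.rTensor (V × Module.Dual ℝ V) (Complex.conjAe.toLinearMap : ℂ →ₗ[ℝ] ℂ)

section Complexification

variable {W : Type*} [AddCommGroup W] [Module ℝ W]

def reImEquiv : ℂ ⊗[ℝ] W ≃ₗ[ℝ] W × W :=
  TensorProduct.congr Complex.equivRealProdLm (LinearEquiv.refl ℝ W) ≪≫ₗ
    TensorProduct.prodLeft ℝ ℝ ℝ ℝ W ≪≫ₗ
    (TensorProduct.lid ℝ W).prodCongr (TensorProduct.lid ℝ W)

@[simp]
lemma reImEquiv_tmul (c : ℂ) (m : W) : reImEquiv (c ⊗ₜ[ℝ] m) = (c.re • m, c.im • m) := rfl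

lemma reImEquiv_symm_apply (a b : W) :
    reImEquiv.symm (a, b) = (1 : ℂ) ⊗ₜ[ℝ] a + Complex.I ⊗ₜ[ℝ] b := by
  rw [LinearEquiv.symm_apply_eq, map_add, reImEquiv_tmul, reImEquiv_tmul]
  simp

lemma I_smul_reImEquiv_symm (a b : W) :
    Complex.I • reImEquiv.symm (a, b) = reImEquiv.symm (-b, a) := by
  simp only [reImEquiv_symm_apply, smul_add, TensorProduct.smul_tmul', smul_eq_mul, mul_one,
    Complex.I_mul_I, TensorProduct.tmul_neg, TensorProduct.neg_tmul]
  abel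

lemma baseChange_reImEquiv_symm (φ : W →ₗ[ℝ] W) (a b : W) :
    φ.baseChange ℂ (reImEquiv.symm (a, b)) = reImEquiv.symm (φ a, φ b) := by
  simp [reImEquiv_symm_apply]

lemma conj_rTensor_reImEquiv_symm (a b : W) :
    (Complex.conjAe.toLinearMap : ℂ →ₗ[ℝ] ℂ).rTensor W (reImEquiv.symm (a, b)) =
      reImEquiv.symm (a, -b) := by
  simp [reImEquiv_symm_apply, TensorProduct.tmul_neg, TensorProduct.neg_tmul]

lemma LinearMap.BilinForm.baseChange_reImEquiv_symm (B : LinearMap.BilinForm ℝ W) (a b c d : W) :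
    B.baseChange ℂ (reImEquiv.symm (a, b)) (reImEquiv.symm (c, d)) =
      ⟨B a c - B b d, B a d + B b c⟩ := by
  simp only [reImEquiv_symm_apply, map_add, LinearMap.add_apply,
    LinearMap.BilinForm.baseChange_tmul]
  apply Complex.ext <;>
    simp only [mul_one, one_mul, Complex.real_smul, Complex.I_mul_I, smul_neg, Complex.add_re,
      Complex.add_im, Complex.neg_re, Complex.neg_im, Complex.mul_re, Complex.mul_im,
      Complex.ofReal_re, Complex.ofReal_im, Complex.I_re, Complex.I_im] <;>
    ring

end Complexification

section Eigenspace

variable {W : Type*} [AddCommGroup W] [Module ℝ W] {φ : W →ₗ[ℝ] W}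

lemma mem_eigenspace_I_iff (hφ : ∀ v, φ (φ v) = -v) {x : ℂ ⊗[ℝ] W} :
    x ∈ Module.End.eigenspace (φ.baseChange ℂ) Complex.I ↔ ∃ a, reImEquiv.symm (a, -φ a) = x := by
  rw [Module.End.mem_eigenspace_iff, ← reImEquiv.symm_apply_apply x]
  generalize reImEquiv x = p
  obtain ⟨a, b⟩ := p
  simp only [baseChange_reImEquiv_symm, I_smul_reImEquiv_symm, reImEquiv.symm.injective.eq_iff,
    Prod.mk.injEq]
  constructor
  · rintro ⟨h, -⟩
    exact ⟨a, rfl, by rw [h, neg_neg]⟩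
  · rintro ⟨c, rfl, rfl⟩
    simp [hφ]

lemma two_mul_finrank_eigenspace_I (hφ : ∀ v, φ (φ v) = -v) :
    2 * finrank ℂ (Module.End.eigenspace (φ.baseChange ℂ) Complex.I) = finrank ℝ W := by
  set L := Module.End.eigenspace (φ.baseChange ℂ) Complex.I
  let f : W →ₗ[ℝ] L.restrictScalars ℝ :=
    LinearMap.codRestrict (L.restrictScalars ℝ)
      (reImEquiv.symm.toLinearMap ∘ₗ LinearMap.id.prod (-φ))
      fun a => (mem_eigenspace_I_iff hφ).2 ⟨a, rfl⟩
  have hf : Function.Bijective f := by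
    refine ⟨fun a b hab => ?_, fun ⟨x, hx⟩ => ?_⟩
    · have hab' : reImEquiv.symm (a, -φ a) = reImEquiv.symm (b, -φ b) := congrArg Subtype.val hab
      exact congrArg Prod.fst (reImEquiv.symm.injective hab')
    · obtain ⟨a, rfl⟩ := (mem_eigenspace_I_iff hφ).1 hx
      exact ⟨a, rfl⟩
  rw [(LinearEquiv.ofBijective f hf).finrank_eq, ← Complex.finrank_real_complex]
  exact finrank_mul_finrank ℝ ℂ L

lemma eigenspace_I_inter_conj (hφ : ∀ v, φ (φ v) = -v) :
    (Module.End.eigenspace (φ.baseChange ℂ) Complex.I : Set (ℂ ⊗[ℝ] W)) ∩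
        (Complex.conjAe.toLinearMap : ℂ →ₗ[ℝ] ℂ).rTensor W ''
          (Module.End.eigenspace (φ.baseChange ℂ) Complex.I : Set (ℂ ⊗[ℝ] W)) = {0} := by
  refine Set.eq_singleton_iff_unique_mem.2 ⟨⟨zero_mem _, 0, zero_mem _, map_zero _⟩, ?_⟩
  rintro _ ⟨hx, y, hy, rfl⟩
  obtain ⟨a, rfl⟩ := (mem_eigenspace_I_iff hφ).1 hy
  obtain ⟨c, hc⟩ := (mem_eigenspace_I_iff hφ).1 hx
  rw [conj_rTensor_reImEquiv_symm, neg_neg, reImEquiv.symm.injective.eq_iff, Prod.mk.injEq] at hc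
  obtain ⟨rfl, hc⟩ := hc
  have hφc : (2 : ℝ) • φ c = 0 := by linear_combination (norm := module) -hc
  have hc0 : c = 0 := calc
    c = -φ (φ c) := by rw [hφ, neg_neg]
    _ = 0 := by rw [(smul_eq_zero.1 hφc).resolve_left two_ne_zero, map_zero, neg_zero]
  simp [hc0, Prod.mk_zero_zero]

variable {B : LinearMap.BilinForm ℝ W}

lemma apply_map_right_eq_neg (hφ : ∀ v, φ (φ v) = -v) (hB : ∀ v w, B (φ v) (φ w) = B v w)
    (v w : W) : B v (φ w) = -B (φ v) w := by
  rw [← hB v (φ w), hφ, map_neg]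

lemma baseChange_eq_zero_of_mem_eigenspace_I (hφ : ∀ v, φ (φ v) = -v)
    (hB : ∀ v w, B (φ v) (φ w) = B v w) :
    ∀ x ∈ Module.End.eigenspace (φ.baseChange ℂ) Complex.I,
      ∀ y ∈ Module.End.eigenspace (φ.baseChange ℂ) Complex.I, B.baseChange ℂ x y = 0 := by
  intro x hx y hy
  obtain ⟨a, rfl⟩ := (mem_eigenspace_I_iff hφ).1 hx
  obtain ⟨c, rfl⟩ := (mem_eigenspace_I_iff hφ).1 hy
  rw [LinearMap.BilinForm.baseChange_reImEquiv_symm]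
  simp only [map_neg, LinearMap.neg_apply, hB, apply_map_right_eq_neg hφ hB]
  apply Complex.ext <;> simp

lemma mem_eigenspace_I_of_forall_baseChange_eq_zero (hφ : ∀ v, φ (φ v) = -v)
    (hB : ∀ v w, B (φ v) (φ w) = B v w) (hBsep : B.SeparatingLeft) {x : ℂ ⊗[ℝ] W}
    (hx : ∀ y ∈ Module.End.eigenspace (φ.baseChange ℂ) Complex.I, B.baseChange ℂ x y = 0) :
    x ∈ Module.End.eigenspace (φ.baseChange ℂ) Complex.I := by
  rw [← reImEquiv.symm_apply_apply x] at hx ⊢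
  generalize reImEquiv x = p at hx ⊢
  obtain ⟨a, b⟩ := p
  have hab : φ a + b = 0 := hBsep _ fun m => by
    have := congrArg Complex.im (hx _ ((mem_eigenspace_I_iff hφ).2 ⟨m, rfl⟩))
    rw [LinearMap.BilinForm.baseChange_reImEquiv_symm] at this
    simpa [apply_map_right_eq_neg hφ hB, add_comm] using this
  exact (mem_eigenspace_I_iff hφ).2 ⟨a, by rw [← eq_neg_of_add_eq_zero_right hab]⟩

end Eigenspace

lemma naturalPairing_separatingLeft (V : Type*) [AddCommGroup V] [Module ℝ V] :
    (naturalPairing V).SeparatingLeft := by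
  rintro ⟨v, α⟩ h
  have hv : v = 0 := (Module.forall_dual_apply_eq_zero_iff ℝ v).1 fun β => by
    simpa [naturalPairing] using h (0, β)
  have hα : α = 0 := LinearMap.ext fun w => by simpa [naturalPairing] using h (w, 0)
  simp [hv, hα]

theorem gacs_eigenspace_maximal_isotropic
    (V : Type*) [AddCommGroup V] [Module ℝ V] [FiniteDimensional ℝ V]
    (φ : (V × Module.Dual ℝ V) →ₗ[ℝ] (V × Module.Dual ℝ V))
    (hφorth : ∀ v w, naturalPairing V (φ v) (φ w) = naturalPairing V v w)
    (hφsq : ∀ v, φ (φ v) = -v)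
    -- `L` is the +i eigenspace of the complexification of φ:
    (L : Submodule ℂ (WC V))
    (hL : ∀ x : WC V, x ∈ L ↔ cplx φ x = Complex.I • x) :
    -- L is isotropic,
    (∀ x ∈ L, ∀ y ∈ L, naturalPairingC V x y = 0) ∧
    -- maximal (anything orthogonal to L lies in L),
    (∀ x, (∀ y ∈ L, naturalPairingC V x y = 0) → x ∈ L) ∧
    -- of complex dimension dim_ℝ V,
    Module.finrank ℂ L = Module.finrank ℝ V ∧
    -- and L ∩ L̄ = 0.
    (L : Set (WC V)) ∩ (conjW V '' (L : Set (WC V))) = {0} := by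
  obtain rfl : L = Module.End.eigenspace (cplx φ) Complex.I := by
    ext x
    exact (hL x).trans Module.End.mem_eigenspace_iff.symm
  refine ⟨baseChange_eq_zero_of_mem_eigenspace_I hφsq hφorth, fun x =>
    mem_eigenspace_I_of_forall_baseChange_eq_zero hφsq hφorth (naturalPairing_separatingLeft V),
    ?_, eigenspace_I_inter_conj hφsq⟩
  have h : 2 * finrank ℂ (Module.End.eigenspace (cplx φ) Complex.I) =
      finrank ℝ (V × Module.Dual ℝ V) := two_mul_finrank_eigenspace_I hφsq
  rw [finrank_prod, Subspace.dual_finrank_eq] at h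
  omega

end
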